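/- Assume every hospital's preference is substitutable and let φ̄ be the doctor-optimal rule. Fix a doctor d and a preference P_d, let y be the contract with {y} = W_d(P_d, O^{φ̄}(P_d)) (the P_d-worst element of d's option set under truth-telling), assume the set {w ∈ 𝐗_d : {w} P_d {y}} is nonempty, and let x be its P_d-minimum. Then {x} P_d W_d(P_d, O^{φ̄}(P'_d)) for every preference P'_d ≠ P_d of doctor d. -/

import Mathlib

set_option linter.unusedSectionVars false

namespace Matching

open Finset

/-- A many-to-one matching market with contracts: each contract `x` involves exactly one
doctor `xD x` and one hospital `xH x`; each hospital `h` has a fixed antisymmetric,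
transitive and complete preference `prH h`, modelled as a linear order on sets of
contracts (only its comparisons between allocations of contracts involving `h` matter). -/
structure Market (D H X : Type*) where
  xD : X → D
  xH : X → H
  prH : H → LinearOrder (Finset X)

/-- A doctor's preference: an antisymmetric, transitive and complete preference, modelled
as a linear order on sets of contracts (only comparisons between `∅` and singletons of
contracts involving the doctor matter). -/
abbrev Pref (X : Type*) := LinearOrder (Finset X)

/-- A profile of doctors' preferences. -/
abbrev Profile (D X : Type*) := D → Pref X

variable {D H X : Type*}
variable [DecidableEq D] [DecidableEq H] [DecidableEq X] [Fintype D] [Fintype H] [Fintype X]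

/-- `Y_d` : the contracts in `Y` involving doctor `d`. -/
def docPart (M : Market D H X) (Y : Finset X) (d : D) : Finset X :=
  Y.filter fun x => M.xD x = d

/-- `Y_h` : the contracts in `Y` involving hospital `h`. -/
def hospPart (M : Market D H X) (Y : Finset X) (h : H) : Finset X :=
  Y.filter fun x => M.xH x = h

/-- An allocation: distinct contracts involve distinct doctors. -/
def IsAllocation (M : Market D H X) (Z : Finset X) : Prop :=
  ∀ x ∈ Z, ∀ y ∈ Z, M.xD x = M.xD y → x = y

/-- `A(Y)` : the allocations contained in `Y`. -/
def allocs (M : Market D H X) (Y : Finset X) : Finset (Finset X) :=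
  Y.powerset.filter fun Z => ∀ x ∈ Z, ∀ y ∈ Z, M.xD x = M.xD y → x = y

lemma empty_mem_allocs (M : Market D H X) (Y : Finset X) : ∅ ∈ allocs M Y := by
  simp [allocs]

/-- The best allocation contained in `Y` according to the linear order `pr`. -/
def bestAlloc (M : Market D H X) (pr : Pref X) (Y : Finset X) : Finset X :=
  @Finset.max' _ pr (allocs M Y) ⟨∅, empty_mem_allocs M Y⟩

/-- `C_h(Y)` : hospital `h`'s choice set from `Y` (the `≻_h`-maximum of `A(Y_h)`). -/
def Ch (M : Market D H X) (h : H) (Y : Finset X) : Finset X :=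
  bestAlloc M (M.prH h) (hospPart M Y h)

/-- `C_d(P_d, Y)` : doctor `d`'s choice set from `Y` (the `P_d`-maximum of `A(Y_d)`). -/
def Cd (M : Market D H X) (Pd : Pref X) (d : D) (Y : Finset X) : Finset X :=
  bestAlloc M Pd (docPart M Y d)

/-- `C_H(Y) = ∪_{h ∈ H} C_h(Y)`. -/
def CH (M : Market D H X) (Y : Finset X) : Finset X :=
  univ.biUnion fun h => Ch M h Y

/-- `C_D(Y) = ∪_{d ∈ D} C_d(Y)`. -/
def CD (M : Market D H X) (P : Profile D X) (Y : Finset X) : Finset X :=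
  univ.biUnion fun d => Cd M (P d) d Y

/-- Substitutability of hospital `h`'s preference: `x ∈ C_h(W)` and `x ∈ Y_h ⊆ W_h`
imply `x ∈ C_h(Y)`. -/
def Substitutable (M : Market D H X) (h : H) : Prop :=
  ∀ W Y : Finset X, hospPart M Y h ⊆ hospPart M W h →
    ∀ x ∈ hospPart M Y h, x ∈ Ch M h W → x ∈ Ch M h Y

/-- The sets `X^t` of still-available contracts in the doctor-proposing deferred
acceptance algorithm (0-based: index `t` corresponds to iteration `t+1`). -/
def DDAsets (M : Market D H X) (P : Profile D X) : ℕ → Finset X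
  | 0 => univ
  | t + 1 =>
      DDAsets M P t \ (CD M P (DDAsets M P t) \ CH M (CD M P (DDAsets M P t)))

/-- `O^t` : the offers made by the doctors at iteration `t` of D-DA (0-based). -/
def offers (M : Market D H X) (P : Profile D X) (t : ℕ) : Finset X :=
  CD M P (DDAsets M P t)

/-- `O_A^t = ∪_{k ≤ t} O^k` : the accumulated offers up to iteration `t` (0-based). -/
def accOffers (M : Market D H X) (P : Profile D X) (t : ℕ) : Finset X :=
  (Finset.range (t + 1)).biUnion fun k => offers M P k

/-- D-DA has stopped at iteration `t`: all offers are accepted. -/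
def DDAstopped (M : Market D H X) (P : Profile D X) (t : ℕ) : Prop :=
  CH M (offers M P t) = offers M P t

/-- The (0-based) last iteration of D-DA, i.e. `T - 1` where `T` is the number of
iterations of D-DA. -/
noncomputable def DDAlast (M : Market D H X) (P : Profile D X) : ℕ :=
  sInf {t | DDAstopped M P t}

/-- The output of D-DA (the algorithm provably stops by iteration `Fintype.card X`,
and once stopped the offer sets stay constant). -/
def DDAoutput (M : Market D H X) (P : Profile D X) : Finset X :=
  CH M (offers M P (Fintype.card X))

/-- The doctor-optimal rule `φ̄`, giving doctor `d`'s outcome `φ̄_d(P)` (an element of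
`A(𝐗_d)`, i.e. `∅` or a singleton). -/
def docOpt (M : Market D H X) (P : Profile D X) (d : D) : Finset X :=
  docPart M (DDAoutput M P) d

/-- The sets `X^t` of still-available contracts in the hospital-proposing deferred
acceptance algorithm (0-based). -/
def HDAsets (M : Market D H X) (P : Profile D X) : ℕ → Finset X
  | 0 => univ
  | t + 1 =>
      HDAsets M P t \ (CH M (HDAsets M P t) \ CD M P (CH M (HDAsets M P t)))

/-- The offers made by the hospitals at iteration `t` of H-DA (0-based). -/
def hOffers (M : Market D H X) (P : Profile D X) (t : ℕ) : Finset X :=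
  CH M (HDAsets M P t)

/-- The output of H-DA. -/
def HDAoutput (M : Market D H X) (P : Profile D X) : Finset X :=
  CD M P (hOffers M P (Fintype.card X))

/-- The hospital-optimal rule `φ̲`, giving doctor `d`'s outcome `φ̲_d(P)`. -/
def hospOpt (M : Market D H X) (P : Profile D X) (d : D) : Finset X :=
  docPart M (HDAoutput M P) d

/-- The option set `O^φ(P_d)` left open by `P_d` at the rule `φ`. -/
def optionSet (rule : Profile D X → D → Finset X) (d : D) (Pd : Pref X) :
    Set (Finset X) :=
  {S | ∃ P : Profile D X, P d = Pd ∧ S = rule P d}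

open scoped Classical in
/-- `W_d(pr, S)` : the `pr`-worst element of the (finite) set `S` of outcomes. -/
noncomputable def worstIn (pr : Pref X) (S : Set (Finset X)) : Finset X :=
  if h : S.Nonempty then
    @Finset.min' _ pr (Set.toFinite S).toFinset ((Set.Finite.toFinset_nonempty _).mpr h)
  else ∅

open scoped Classical in
/-- The `pr`-best element of the (finite) set `S` of outcomes. -/
noncomputable def bestIn (pr : Pref X) (S : Set (Finset X)) : Finset X :=
  if h : S.Nonempty then
    @Finset.max' _ pr (Set.toFinite S).toFinset ((Set.Finite.toFinset_nonempty _).mpr h)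
  else ∅

/-- `P'_d` is a manipulation of the rule at `P_d` : for some subprofile of the other
doctors, reporting `P'_d` gives a strictly `P_d`-better outcome than truth-telling. -/
def IsManip (rule : Profile D X → D → Finset X) (d : D) (Pd P'd : Pref X) : Prop :=
  ∃ P : Profile D X, P d = Pd ∧
    Pd.lt (rule P d) (rule (Function.update P d P'd) d)

/-- `P'_d` is an obvious manipulation of the rule at `P_d`. -/
def IsObviousManip (rule : Profile D X → D → Finset X) (d : D) (Pd P'd : Pref X) :
    Prop :=
  IsManip rule d Pd P'd ∧
    (Pd.lt (worstIn Pd (optionSet rule d Pd)) (worstIn Pd (optionSet rule d P'd)) ∨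
     Pd.lt (bestIn Pd (optionSet rule d Pd)) (bestIn Pd (optionSet rule d P'd)))

/-- A rule is not obviously manipulable (NOM). -/
def NOM (rule : Profile D X → D → Finset X) : Prop :=
  ∀ (d : D) (Pd P'd : Pref X), ¬ IsObviousManip rule d Pd P'd

/-- A rule is obviously manipulable (OM). -/
def OM (rule : Profile D X → D → Finset X) : Prop :=
  ∃ (d : D) (Pd P'd : Pref X), IsObviousManip rule d Pd P'd

/-- `Y` is a stable allocation at the profile `P` : it is an individually rational
allocation and admits no blocking contract. -/
def IsStable (M : Market D H X) (P : Profile D X) (Y : Finset X) : Prop :=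
  IsAllocation M Y ∧ CD M P Y = Y ∧ CH M Y = Y ∧
    ∀ x : X, x ∉ Y →
      ¬ (x ∈ Cd M (P (M.xD x)) (M.xD x) (insert x Y) ∧
         x ∈ Ch M (M.xH x) (insert x Y))

/-- `⌈kq⌉` where `k` is the number of stable allocations at `P`. -/
noncomputable def quantileIndex (M : Market D H X) (P : Profile D X) (q : ℝ) : ℕ :=
  ⌈(Set.ncard {Y : Finset X | IsStable M P Y} : ℝ) * q⌉₊

/-- `Z` is doctor `d`'s `⌈kq⌉`-th best outcome (according to `P d`) among the `k` stable
allocations at `P` : it is the outcome of some stable allocation, strictly fewer than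
`⌈kq⌉` stable allocations give `d` a strictly better outcome, and at least `⌈kq⌉` stable
allocations give `d` a weakly better outcome. -/
def IsQuantileOutcome (M : Market D H X) (P : Profile D X) (q : ℝ) (d : D)
    (Z : Finset X) : Prop :=
  (∃ Y : Finset X, IsStable M P Y ∧ docPart M Y d = Z) ∧
    Set.ncard {Y : Finset X | IsStable M P Y ∧ (P d).lt Z (docPart M Y d)} <
      quantileIndex M P q ∧
    quantileIndex M P q ≤
      Set.ncard {Y : Finset X | IsStable M P Y ∧ (P d).le Z (docPart M Y d)}

/-!
Let `P₀` be a profile with `P₀ d = P_d` at which `d` obtains `y`. Since `{x} P_d {y}`, the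
contract `x` is proposed and rejected at some round `t` of D-DA at `P₀`; by then every contract of
`d` that `d` prefers to `y` has been proposed. By substitutability, rejected contracts stay rejected
against all later offers, so the hospitals choose the held set `V := C_H(O^t)` (which contains no
contract of `d`) also from all offers made up to round `t`, even after one more contract of `d` is
added. Now let `d` report any `Q` and let every other doctor find only their contract in `V`
acceptable. D-DA at this profile keeps `V` while `d` proposes, and every contract of `d` that `d`
prefers to `y` is rejected against `V`; so `d` ends with an outcome no better than `{y}`. Hence
`W_d(P_d, O^{φ̄}(Q)) ≼ {y} ≺ {x}`.
-/

section ChoiceFunctions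

variable {M : Market D H X}

@[simp] lemma mem_docPart {Y : Finset X} {d : D} {c : X} :
    c ∈ docPart M Y d ↔ c ∈ Y ∧ M.xD c = d := mem_filter

@[simp] lemma mem_hospPart {Y : Finset X} {h : H} {c : X} :
    c ∈ hospPart M Y h ↔ c ∈ Y ∧ M.xH c = h := mem_filter

lemma mem_allocs {Y Z : Finset X} : Z ∈ allocs M Y ↔ Z ⊆ Y ∧ IsAllocation M Z := by
  simp [allocs, IsAllocation]

lemma bestAlloc_mem_allocs (pr : Pref X) (Y : Finset X) : bestAlloc M pr Y ∈ allocs M Y :=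
  @max'_mem _ pr _ _

lemma bestAlloc_subset (pr : Pref X) (Y : Finset X) : bestAlloc M pr Y ⊆ Y :=
  (mem_allocs.1 (bestAlloc_mem_allocs pr Y)).1

lemma isAllocation_bestAlloc (pr : Pref X) (Y : Finset X) :
    IsAllocation M (bestAlloc M pr Y) :=
  (mem_allocs.1 (bestAlloc_mem_allocs pr Y)).2

lemma le_bestAlloc (pr : Pref X) {Y Z : Finset X} (hZ : Z ∈ allocs M Y) :
    pr.le Z (bestAlloc M pr Y) :=
  @le_max' _ pr _ _ hZ

lemma bestAlloc_eq {pr : Pref X} {Y B : Finset X} (hB : B ∈ allocs M Y)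
    (hmax : ∀ Z ∈ allocs M Y, pr.le Z B) : bestAlloc M pr Y = B :=
  pr.le_antisymm _ _ (hmax _ (bestAlloc_mem_allocs pr Y)) (le_bestAlloc pr hB)

lemma bestAlloc_eq_of_subset (pr : Pref X) {Y W : Finset X} (hYW : Y ⊆ W)
    (hW : bestAlloc M pr W ⊆ Y) : bestAlloc M pr Y = bestAlloc M pr W :=
  bestAlloc_eq (mem_allocs.2 ⟨hW, isAllocation_bestAlloc pr W⟩) fun _ hZ =>
    le_bestAlloc pr (mem_allocs.2 ⟨(mem_allocs.1 hZ).1.trans hYW, (mem_allocs.1 hZ).2⟩)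

lemma mem_Cd {pr : Pref X} {d : D} {Y : Finset X} {c : X} (hc : c ∈ Cd M pr d Y) :
    c ∈ Y ∧ M.xD c = d :=
  mem_docPart.1 (bestAlloc_subset pr _ hc)

lemma Cd_eq_singleton {pr : Pref X} {d : D} {Y : Finset X} {c : X} (hc : c ∈ Cd M pr d Y) :
    Cd M pr d Y = {c} :=
  eq_singleton_iff_unique_mem.2 ⟨hc, fun _ hc' =>
    isAllocation_bestAlloc pr _ _ hc' c hc ((mem_Cd hc').2.trans (mem_Cd hc).2.symm)⟩

lemma Cd_eq_empty_or_singleton (pr : Pref X) (d : D) (Y : Finset X) :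
    Cd M pr d Y = ∅ ∨ ∃ c, Cd M pr d Y = {c} :=
  (Cd M pr d Y).eq_empty_or_nonempty.imp_right fun ⟨c, hc⟩ => ⟨c, Cd_eq_singleton hc⟩

lemma empty_le_Cd (pr : Pref X) (d : D) (Y : Finset X) : pr.le ∅ (Cd M pr d Y) :=
  le_bestAlloc pr (empty_mem_allocs M _)

lemma notMem_of_Cd_lt {pr : Pref X} {d : D} {Y : Finset X} {w : X} (hwd : M.xD w = d)
    (hlt : pr.lt (Cd M pr d Y) {w}) : w ∉ Y := fun hwY =>
  (@not_le _ pr _ _).2 hlt <| le_bestAlloc pr <|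
    mem_allocs.2 ⟨by simpa using ⟨hwY, hwd⟩, by simp [IsAllocation]⟩

lemma Cd_eq_of_subset {pr : Pref X} {d : D} {Y W : Finset X} {c : X} (hYW : Y ⊆ W)
    (hc : c ∈ Cd M pr d W) (hcY : c ∈ Y) : Cd M pr d Y = {c} := by
  rw [← Cd_eq_singleton hc]
  refine bestAlloc_eq_of_subset pr (filter_subset_filter _ hYW) ?_
  rw [show bestAlloc M pr (docPart M W d) = {c} from Cd_eq_singleton hc]
  simpa using ⟨hcY, (mem_Cd hc).2⟩

lemma mem_Ch {h : H} {Y : Finset X} {c : X} (hc : c ∈ Ch M h Y) : c ∈ Y ∧ M.xH c = h :=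
  mem_hospPart.1 (bestAlloc_subset _ _ hc)

lemma mem_CH {Y : Finset X} {c : X} : c ∈ CH M Y ↔ c ∈ Ch M (M.xH c) Y := by
  simp only [CH, mem_biUnion, mem_univ, true_and]
  exact ⟨fun ⟨_, hc⟩ => (mem_Ch hc).2 ▸ hc, fun hc => ⟨_, hc⟩⟩

lemma CH_subset (Y : Finset X) : CH M Y ⊆ Y := fun _ hc => (mem_Ch (mem_CH.1 hc)).1

lemma CH_eq_of_subset {Y W : Finset X} (hYW : Y ⊆ W) (hW : CH M W ⊆ Y) :
    CH M Y = CH M W := by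
  have hCh : ∀ h, Ch M h Y = Ch M h W := fun h =>
    bestAlloc_eq_of_subset _ (filter_subset_filter _ hYW) fun c hc => by
      obtain ⟨-, rfl⟩ := mem_Ch hc
      exact mem_hospPart.2 ⟨hW (mem_CH.2 hc), rfl⟩
  simp only [CH, hCh]

lemma CH_CH (Y : Finset X) : CH M (CH M Y) = CH M Y :=
  CH_eq_of_subset (CH_subset Y) subset_rfl

lemma CH_insert_of_notMem {Y : Finset X} {w : X} (hw : w ∉ CH M (insert w Y)) :
    CH M (insert w Y) = CH M Y :=
  (CH_eq_of_subset (subset_insert w Y) fun c hc =>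
    (mem_insert.1 (CH_subset _ hc)).resolve_left (by rintro rfl; exact hw hc)).symm

lemma mem_CH_of_subset (hsub : ∀ h : H, Substitutable M h) {Y W : Finset X} {c : X}
    (hYW : Y ⊆ W) (hc : c ∈ Y) (hcW : c ∈ CH M W) : c ∈ CH M Y :=
  mem_CH.2 <| hsub _ W Y (filter_subset_filter _ hYW) c (mem_hospPart.2 ⟨hc, rfl⟩)
    (mem_CH.1 hcW)

lemma mem_CD {P : Profile D X} {Y : Finset X} {c : X} :
    c ∈ CD M P Y ↔ c ∈ Cd M (P (M.xD c)) (M.xD c) Y := by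
  simp only [CD, mem_biUnion, mem_univ, true_and]
  exact ⟨fun ⟨_, hc⟩ => (mem_Cd hc).2 ▸ hc, fun hc => ⟨_, hc⟩⟩

lemma docPart_CD (P : Profile D X) (Y : Finset X) (d : D) :
    docPart M (CD M P Y) d = Cd M (P d) d Y := by
  ext c
  simp only [mem_docPart, mem_CD]
  exact ⟨fun ⟨hc, hcd⟩ => hcd ▸ hc, fun hc => ⟨(mem_Cd hc).2 ▸ hc, (mem_Cd hc).2⟩⟩

lemma isAllocation_CD (P : Profile D X) (Y : Finset X) : IsAllocation M (CD M P Y) :=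
  fun a ha b hb hab => by
    rw [mem_CD] at ha hb
    rw [hab] at ha
    exact isAllocation_bestAlloc _ _ a ha b hb hab

end ChoiceFunctions

section DeferredAcceptance

variable {M : Market D H X} {P : Profile D X}

lemma DDAsets_succ (t : ℕ) :
    DDAsets M P (t + 1) = DDAsets M P t \ (offers M P t \ CH M (offers M P t)) := rfl

lemma mem_DDAsets_succ {t : ℕ} {c : X} : c ∈ DDAsets M P (t + 1) ↔
    c ∈ DDAsets M P t ∧ (c ∈ offers M P t → c ∈ CH M (offers M P t)) := by
  rw [DDAsets_succ]
  simp only [mem_sdiff, not_and, not_not]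

lemma DDAsets_antitone : Antitone (DDAsets M P) :=
  antitone_nat_of_succ_le fun _ => sdiff_subset

lemma mem_offers {t : ℕ} {c : X} :
    c ∈ offers M P t ↔ c ∈ Cd M (P (M.xD c)) (M.xD c) (DDAsets M P t) := mem_CD

lemma offers_subset_DDAsets (t : ℕ) : offers M P t ⊆ DDAsets M P t :=
  fun _ hc => (mem_Cd (mem_offers.1 hc)).1

lemma DDAsets_succ_of_stopped {t : ℕ} (h : DDAstopped M P t) :
    DDAsets M P (t + 1) = DDAsets M P t := by
  rw [DDAsets_succ, show CH M (offers M P t) = offers M P t from h, sdiff_self, sdiff_bot]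

lemma DDAsets_eq_of_stopped {s t : ℕ} (h : DDAstopped M P t) (hts : t ≤ s) :
    DDAsets M P s = DDAsets M P t := by
  induction s, hts using Nat.le_induction with
  | base => rfl
  | succ s _ ih =>
    rw [DDAsets_succ_of_stopped (by simpa only [DDAstopped, offers, ih] using h), ih]

lemma DDAstopped_of_le {s t : ℕ} (h : DDAstopped M P t) (hts : t ≤ s) : DDAstopped M P s := by
  simpa only [DDAstopped, offers, DDAsets_eq_of_stopped h hts] using h

lemma DDAsets_succ_ssubset {t : ℕ} (h : ¬ DDAstopped M P t) :
    DDAsets M P (t + 1) ⊂ DDAsets M P t := by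
  refine ssubset_of_subset_of_ne sdiff_subset fun heq => h ?_
  refine (CH_subset _).antisymm fun c hc => ?_
  exact (mem_DDAsets_succ.1 (heq ▸ offers_subset_DDAsets t hc)).2 hc

lemma card_DDAsets_add_le {n : ℕ} (h : ∀ k < n, ¬ DDAstopped M P k) :
    #(DDAsets M P n) + n ≤ Fintype.card X := by
  induction n with
  | zero => exact card_le_univ _
  | succ n ih =>
    have hlt := card_lt_card (DDAsets_succ_ssubset (h n n.lt_succ_self))
    have hle := ih fun k hk => h k (hk.trans n.lt_succ_self)
    omega

lemma DDAstopped_card : DDAstopped M P (Fintype.card X) := by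
  by_contra hN
  have := card_DDAsets_add_le (M := M) (P := P) (n := Fintype.card X + 1)
    fun k hk hk' => hN (DDAstopped_of_le hk' (Nat.lt_succ_iff.1 hk))
  omega

lemma docOpt_eq_docPart_offers (d : D) :
    docOpt M P d = docPart M (offers M P (Fintype.card X)) d := by
  rw [docOpt, DDAoutput, show CH M (offers M P _) = _ from DDAstopped_card]

lemma docOpt_eq_Cd (d : D) : docOpt M P d = Cd M (P d) d (DDAsets M P (Fintype.card X)) := by
  rw [docOpt_eq_docPart_offers]
  exact docPart_CD _ _ _

lemma exists_rejected_of_notMem {t : ℕ} {c : X} (hc : c ∉ DDAsets M P t) :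
    ∃ k < t, c ∈ offers M P k ∧ c ∉ CH M (offers M P k) := by
  induction t with
  | zero => exact absurd (mem_univ c) hc
  | succ t ih =>
    by_cases hct : c ∈ DDAsets M P t
    · rw [mem_DDAsets_succ, not_and, Classical.not_imp] at hc
      exact ⟨t, t.lt_succ_self, hc hct⟩
    · obtain ⟨k, hk, hrej⟩ := ih hct
      exact ⟨k, hk.trans t.lt_succ_self, hrej⟩

lemma mem_offers_of_le {s t : ℕ} {c : X} (hst : s ≤ t) (hc : c ∈ offers M P s)
    (hct : c ∈ DDAsets M P t) : c ∈ offers M P t := by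
  rw [mem_offers] at hc ⊢
  rw [Cd_eq_of_subset (DDAsets_antitone hst) hc hct]
  exact mem_singleton_self c

lemma mem_accOffers {t : ℕ} {c : X} :
    c ∈ accOffers M P t ↔ ∃ k ≤ t, c ∈ offers M P k := by
  simp [accOffers]

lemma offers_subset_accOffers {k t : ℕ} (hkt : k ≤ t) : offers M P k ⊆ accOffers M P t :=
  fun _ hc => mem_accOffers.2 ⟨k, hkt, hc⟩

lemma accOffers_mono {s t : ℕ} (hst : s ≤ t) : accOffers M P s ⊆ accOffers M P t :=
  fun _ hc =>
    have ⟨k, hks, hck⟩ := mem_accOffers.1 hc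
    mem_accOffers.2 ⟨k, hks.trans hst, hck⟩

lemma mem_accOffers_of_notMem_DDAsets {t : ℕ} {c : X} (hc : c ∉ DDAsets M P (t + 1)) :
    c ∈ accOffers M P t :=
  have ⟨_, hk, hck, _⟩ := exists_rejected_of_notMem hc
  offers_subset_accOffers (Nat.lt_succ_iff.1 hk) hck

/-- By substitutability, a contract rejected at some round is also rejected from every later
cumulative offer set. -/
theorem CH_accOffers (hsub : ∀ h : H, Substitutable M h) (t : ℕ) :
    CH M (accOffers M P t) = CH M (offers M P t) := by
  induction t using Nat.strong_induction_on with
  | _ t ih =>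
    refine (CH_eq_of_subset (offers_subset_accOffers le_rfl) fun c hc => ?_).symm
    obtain ⟨k, hkt, hck⟩ := mem_accOffers.1 (CH_subset _ hc)
    by_contra hco
    obtain ⟨j, hjt, hcj, hrej⟩ :=
      exists_rejected_of_notMem fun hct => hco (mem_offers_of_le hkt hck hct)
    rw [← ih j hjt] at hrej
    exact hrej (mem_CH_of_subset hsub (accOffers_mono hjt.le)
      (offers_subset_accOffers le_rfl hcj) hc)

lemma CH_insert_CH_offers (hsub : ∀ h : H, Substitutable M h) {t : ℕ} {w : X}
    (hw : w ∈ accOffers M P t) :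
    CH M (insert w (CH M (offers M P t))) = CH M (offers M P t) := by
  have hsubset : insert w (CH M (offers M P t)) ⊆ accOffers M P t :=
    insert_subset hw ((CH_subset _).trans (offers_subset_accOffers le_rfl))
  rw [CH_eq_of_subset hsubset (by rw [CH_accOffers hsub]; exact subset_insert _ _),
    CH_accOffers hsub]

end DeferredAcceptance

section Adversary

variable {M : Market D H X}

def topRank (S A : Finset X) : ℕ := if A = S then 2 else if A = ∅ then 1 else 0

/-- The preference of a doctor who finds only `S` acceptable: `S` first, then `∅`. -/
@[reducible] noncomputable def onlyAcceptable (S : Finset X) : Pref X :=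
  LinearOrder.lift' (fun A => toLex (topRank S A, Fintype.equivFin (Finset X) A))
    fun _ _ h => (Fintype.equivFin _).injective (Prod.ext_iff.1 (toLex.injective h)).2

lemma onlyAcceptable_le_of_topRank_lt {S A B : Finset X} (h : topRank S A < topRank S B) :
    (onlyAcceptable S).le A B :=
  Prod.Lex.le_iff.2 (Or.inl h)

lemma bestAlloc_onlyAcceptable (S Y : Finset X) :
    bestAlloc M (onlyAcceptable S) Y = if S ∈ allocs M Y then S else ∅ := by
  split_ifs with hS
  · refine bestAlloc_eq hS fun Z _ => ?_
    by_cases hZS : Z = S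
    · exact hZS ▸ (onlyAcceptable S).le_refl Z
    · refine onlyAcceptable_le_of_topRank_lt ?_
      simp only [topRank, hZS, if_true, if_false]
      split_ifs <;> omega
  · refine bestAlloc_eq (empty_mem_allocs M Y) fun Z hZ => ?_
    have hZS : Z ≠ S := by rintro rfl; exact hS hZ
    have hES : ∅ ≠ S := by rintro rfl; exact hS (empty_mem_allocs M Y)
    by_cases hZE : Z = ∅
    · exact hZE ▸ (onlyAcceptable S).le_refl Z
    · exact onlyAcceptable_le_of_topRank_lt (by simp [topRank, hZS, hZE, hES])

lemma docPart_eq_singleton {V : Finset X} (hV : IsAllocation M V) {c : X} (hc : c ∈ V) :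
    docPart M V (M.xD c) = {c} :=
  eq_singleton_iff_unique_mem.2 ⟨mem_docPart.2 ⟨hc, rfl⟩, fun _ hc' =>
    hV _ (mem_docPart.1 hc').1 c hc (mem_docPart.1 hc').2⟩

@[reducible] noncomputable def adversary (M : Market D H X) (V : Finset X) (d : D) (Q : Pref X) :
    Profile D X :=
  Function.update (fun d' => onlyAcceptable (docPart M V d')) d Q

lemma adversary_self (V : Finset X) (d : D) (Q : Pref X) : adversary M V d Q d = Q :=
  Function.update_self ..

lemma CD_adversary {V : Finset X} {d : D} (Q : Pref X) (hVd : ∀ c ∈ V, M.xD c ≠ d)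
    (hV : IsAllocation M V) (Z : Finset X) :
    CD M (adversary M V d Q) Z = V ∩ Z ∪ Cd M Q d Z := by
  ext c
  rw [mem_CD, mem_union, mem_inter]
  by_cases hcd : M.xD c = d
  · have hcV : c ∉ V := fun hc => hVd c hc hcd
    rw [hcd, adversary_self]
    tauto
  · have hcCd : c ∉ Cd M Q d Z := fun hc => hcd (mem_Cd hc).2
    rw [adversary, Function.update_of_ne hcd, Cd, bestAlloc_onlyAcceptable]
    by_cases hcV : c ∈ V
    · rw [docPart_eq_singleton hV hcV]
      by_cases hcZ : c ∈ Z <;> simp [mem_allocs, IsAllocation, hcV, hcCd, hcZ]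
    · have : c ∉ docPart M V (M.xD c) := by simp [hcV]
      split_ifs <;> simp [*]

end Adversary

section AdversaryRun

variable {M : Market D H X} {P : Profile D X} {V : Finset X} {d : D}
  (hCD : ∀ Z, CD M P Z = V ∩ Z ∪ Cd M (P d) d Z)
include hCD

lemma offers_eq_insert {t : ℕ} {w : X} (hVt : V ⊆ DDAsets M P t)
    (hw : w ∈ Cd M (P d) d (DDAsets M P t)) : offers M P t = insert w V := by
  rw [offers, hCD, inter_eq_left.2 hVt, Cd_eq_singleton hw, union_comm, insert_eq]

lemma mem_CH_insert_of_DDAstopped {t : ℕ} (hVt : V ⊆ DDAsets M P t) (hst : DDAstopped M P t)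
    {w : X} (hw : w ∈ docPart M (offers M P t) d) : w ∈ CH M (insert w V) := by
  rw [offers, docPart_CD] at hw
  rw [← offers_eq_insert hCD hVt hw, show CH M (offers M P t) = _ from hst,
    offers_eq_insert hCD hVt hw]
  exact mem_insert_self w V

lemma subset_DDAsets_or_DDAstopped_succ (hVd : ∀ c ∈ V, M.xD c ≠ d) (hVst : CH M V = V)
    {t : ℕ} (hVt : V ⊆ DDAsets M P t) (hst : ¬ DDAstopped M P t) :
    V ⊆ DDAsets M P (t + 1) ∨ (DDAstopped M P (t + 1) ∧
      ∀ w ∈ docPart M (offers M P (t + 1)) d, w ∈ CH M (insert w V)) := by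
  obtain hnone | ⟨w, hw⟩ := Cd_eq_empty_or_singleton (M := M) (P d) d (DDAsets M P t)
  · refine absurd ?_ hst
    rw [DDAstopped, offers, hCD, inter_eq_left.2 hVt, hnone, union_empty, hVst]
  have hwt : w ∈ Cd M (P d) d (DDAsets M P t) := hw ▸ mem_singleton_self w
  have ho := offers_eq_insert hCD hVt hwt
  by_cases hacc : w ∈ CH M (insert w V)
  · have hwt1 : w ∈ DDAsets M P (t + 1) :=
      mem_DDAsets_succ.2 ⟨(mem_Cd hwt).1, fun _ => ho ▸ hacc⟩
    have ho1 : offers M P (t + 1) = CH M (insert w V) := by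
      rw [offers, hCD, Cd_eq_of_subset (DDAsets_antitone t.le_succ) hwt hwt1]
      ext c
      simp only [mem_union, mem_inter, mem_DDAsets_succ, ho, mem_singleton]
      constructor
      · rintro (⟨hcV, -, hcC⟩ | rfl)
        · exact hcC (mem_insert_of_mem hcV)
        · exact hacc
      · intro hcC
        rcases mem_insert.1 (CH_subset _ hcC) with rfl | hcV
        · exact Or.inr rfl
        · exact Or.inl ⟨hcV, hVt hcV, fun _ => hcC⟩
    refine Or.inr ⟨by rw [DDAstopped, ho1, CH_CH], fun w' hw' => ?_⟩
    rw [ho1, mem_docPart] at hw'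
    obtain rfl | hw'V := mem_insert.1 (CH_subset _ hw'.1)
    · exact hacc
    · exact absurd hw'.2 (hVd w' hw'V)
  · refine Or.inl fun c hcV => mem_DDAsets_succ.2 ⟨hVt hcV, fun _ => ?_⟩
    rw [ho, CH_insert_of_notMem hacc, hVst]
    exact hcV

lemma subset_DDAsets_or_DDAstopped (hVd : ∀ c ∈ V, M.xD c ≠ d) (hVst : CH M V = V) (t : ℕ) :
    V ⊆ DDAsets M P t ∨ (DDAstopped M P t ∧
      ∀ w ∈ docPart M (offers M P t) d, w ∈ CH M (insert w V)) := by
  induction t with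
  | zero => exact Or.inl (subset_univ V)
  | succ t ih =>
    by_cases hst : DDAstopped M P t
    · have hO : offers M P (t + 1) = offers M P t := by
        rw [offers, offers, DDAsets_succ_of_stopped hst]
      rw [DDAsets_succ_of_stopped hst, DDAstopped, hO]
      exact ih
    · exact subset_DDAsets_or_DDAstopped_succ hCD hVd hVst
        (ih.resolve_right fun h => hst h.1) hst

theorem mem_CH_insert_of_mem_docOpt (hVd : ∀ c ∈ V, M.xD c ≠ d) (hVst : CH M V = V)
    {w : X} (hw : w ∈ docOpt M P d) : w ∈ CH M (insert w V) := by
  rw [docOpt_eq_docPart_offers] at hw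
  obtain hVN | ⟨-, haccepted⟩ := subset_DDAsets_or_DDAstopped hCD hVd hVst (Fintype.card X)
  · exact mem_CH_insert_of_DDAstopped hCD hVN DDAstopped_card hw
  · exact haccepted w hw

end AdversaryRun

section Claim

variable {M : Market D H X}

lemma docOpt_le_singleton {P : Profile D X} {d : D} {pr : Pref X} {y : X} (hy : pr.le ∅ {y})
    (h : ∀ w ∈ docOpt M P d, ¬ pr.lt {y} {w}) : pr.le (docOpt M P d) {y} := by
  rw [docOpt_eq_Cd] at h ⊢
  obtain hE | ⟨w, hw⟩ :=
    Cd_eq_empty_or_singleton (M := M) (P d) d (DDAsets M P (Fintype.card X))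
  · rwa [hE]
  · rw [hw] at h ⊢
    exact (@not_lt _ pr _ _).1 (h w (mem_singleton_self w))

theorem exists_docOpt_le (hsub : ∀ h : H, Substitutable M h) {d : D} {Pd : Pref X} {y x : X}
    {P0 : Profile D X} (hP0 : P0 d = Pd) (hy : docOpt M P0 d = {y}) (hxd : M.xD x = d)
    (hxy : Pd.lt {y} {x})
    (hxmin : ∀ w : X, M.xD w = d → Pd.lt {y} {w} → Pd.le {x} {w}) (Q : Pref X) :
    ∃ P : Profile D X, P d = Q ∧ Pd.le (docOpt M P d) {y} := by
  have hyN : Cd M Pd d (DDAsets M P0 (Fintype.card X)) = {y} :=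
    hP0 ▸ (docOpt_eq_Cd d).symm.trans hy
  obtain ⟨t, -, hxt, hxrej⟩ := exists_rejected_of_notMem (notMem_of_Cd_lt hxd (hyN ▸ hxy))
  have hxCd : Cd M Pd d (DDAsets M P0 t) = {x} := by
    have := mem_offers.1 hxt
    rw [hxd, hP0] at this
    exact Cd_eq_singleton this
  set V := CH M (offers M P0 t)
  have hVd : ∀ c ∈ V, M.xD c ≠ d := fun c hcV hcd => by
    have := mem_offers.1 (CH_subset _ hcV)
    rw [hcd, hP0, hxCd, mem_singleton] at this
    exact hxrej (this ▸ hcV)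
  have hrej : ∀ w, M.xD w = d → Pd.lt {y} {w} → w ∉ CH M (insert w V) := fun w hwd hyw => by
    have hw : w ∉ DDAsets M P0 (t + 1) := by
      rcases eq_or_ne w x with rfl | hwx
      · exact fun h => hxrej ((mem_DDAsets_succ.1 h).2 hxt)
      · have hxw : Pd.lt {x} {w} := @lt_of_le_of_ne _ Pd.toPartialOrder _ _ (hxmin w hwd hyw)
          (by simpa using hwx.symm)
        exact fun h => notMem_of_Cd_lt hwd (hxCd ▸ hxw) (DDAsets_antitone t.le_succ h)
    rw [CH_insert_CH_offers hsub (mem_accOffers_of_notMem_DDAsets hw)]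
    exact fun hwV => hVd w hwV hwd
  have hVall : IsAllocation M V := fun a ha b hb =>
    isAllocation_CD _ _ a (CH_subset _ ha) b (CH_subset _ hb)
  have hCD : ∀ Z, CD M (adversary M V d Q) Z = V ∩ Z ∪ Cd M (adversary M V d Q d) d Z := by
    rw [adversary_self]
    exact CD_adversary Q hVd hVall
  refine ⟨adversary M V d Q, adversary_self V d Q,
    docOpt_le_singleton (hyN ▸ empty_le_Cd Pd d _) fun w hw hyw => ?_⟩
  exact hrej w (mem_docPart.1 hw).2 hyw (mem_CH_insert_of_mem_docOpt hCD hVd (CH_CH _) hw)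

end Claim

lemma worstIn_mem (pr : Pref X) {S : Set (Finset X)} (hS : S.Nonempty) : worstIn pr S ∈ S := by
  rw [worstIn, dif_pos hS]
  exact (Set.Finite.mem_toFinset _).1 (@min'_mem _ pr _ _)

lemma worstIn_le (pr : Pref X) {S : Set (Finset X)} {z : Finset X} (hz : z ∈ S) :
    pr.le (worstIn pr S) z := by
  rw [worstIn, dif_pos ⟨z, hz⟩]
  exact @min'_le _ pr _ z ((Set.Finite.mem_toFinset _).2 hz)

/-- Claim 1 in the proof of Theorem 1: let `y` be the contract with
`{y} = W_d(P_d, O^{φ̄}(P_d))`, assume `{w ∈ 𝐗_d : {w} P_d {y}}` is nonempty and let `x`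
be its `P_d`-minimum; then `{x} P_d W_d(P_d, O^{φ̄}(P'_d))` for every `P'_d ≠ P_d`. -/
theorem docOpt_claim1 (M : Market D H X) (hsub : ∀ h : H, Substitutable M h)
    (d : D) (Pd : Pref X) (y : X)
    (hy : worstIn Pd (optionSet (docOpt M) d Pd) = {y})
    (x : X) (hxd : M.xD x = d) (hxy : Pd.lt ({y} : Finset X) {x})
    (hxmin : ∀ w : X, M.xD w = d → Pd.lt ({y} : Finset X) {w} →
      Pd.le ({x} : Finset X) {w}) :
    ∀ P'd : Pref X, P'd ≠ Pd →
      Pd.lt (worstIn Pd (optionSet (docOpt M) d P'd)) ({x} : Finset X) := by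
  intro P'd _
  obtain ⟨P0, hP0, hP0y⟩ : {y} ∈ optionSet (docOpt M) d Pd :=
    hy ▸ worstIn_mem Pd ⟨_, fun _ => Pd, rfl, rfl⟩
  obtain ⟨P, hP, hPy⟩ := exists_docOpt_le hsub hP0 hP0y.symm hxd hxy hxmin P'd
  exact @lt_of_le_of_lt _ Pd.toPreorder _ _ _
    (Pd.le_trans _ _ _ (worstIn_le Pd ⟨P, hP, rfl⟩) hPy) hxy

end Matching
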